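/- Let x* ∈ ℝ, φ* ∈ ℝ, φ'' > 0, a > 0, and σ > 0. Let v be a random variable with distribution N(0, σ²) and W a bounded random variable independent of v with E[W] = 0. For x̃ ∈ ℝ, the expectation E[ sin(v) · (φ* + (φ''/2)(x̃ + a sin(v))² + W) ] equals (a φ''(1 - e^{-2σ²})/2) · x̃. -/

import Mathlib

/-!
Expanding the square, the drift is a linear combination of the moments `E[sin v]`, `E[sin² v]`,
`E[sin³ v]` and of `E[sin v · W]`. The odd moments vanish because the centred Gaussian law is
invariant under `x ↦ -x`, the last term factors by independence into `E[sin v] E[W] = 0`, and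
`E[sin² v] = (1 - E[cos 2v]) / 2` where `E[cos 2v] = e^{-2σ²}` is the real part of the
characteristic function of `N(0, σ²)` at `2`.
-/

open MeasureTheory ProbabilityTheory
open scoped NNReal

instance isNegInvariant_gaussianReal_zero (v : ℝ≥0) : (gaussianReal 0 v).IsNegInvariant :=
  ⟨by simpa [Measure.neg_def] using gaussianReal_map_neg (μ := 0) (v := v)⟩

theorem integral_eq_zero_of_odd {G E : Type*} [MeasurableSpace G] [AddGroup G] [MeasurableNeg G]
    [NormedAddCommGroup E] [NormedSpace ℝ E] (μ : Measure G) [μ.IsNegInvariant] {f : G → E}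
    (hf : ∀ x, f (-x) = -f x) :
    ∫ x, f x ∂μ = 0 := by
  have h := integral_neg_eq_self f μ
  simp only [hf, integral_neg] at h
  have h2 : (2 : ℝ) • ∫ x, f x ∂μ = 0 := by
    rw [two_smul]; nth_rw 1 [← h]; exact neg_add_cancel _
  simpa using h2

theorem integral_cos_mul_gaussianReal (μ : ℝ) (v : ℝ≥0) (t : ℝ) :
    ∫ x, Real.cos (t * x) ∂gaussianReal μ v = Real.exp (-(v * t ^ 2 / 2)) * Real.cos (t * μ) := by
  have hint : Integrable (fun x : ℝ ↦ Complex.exp (t * x * Complex.I)) (gaussianReal μ v) :=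
    (integrable_const (1 : ℝ)).mono' (by fun_prop) (ae_of_all _ fun x ↦ by
      rw [← Complex.ofReal_mul]; exact (Complex.norm_exp_ofReal_mul_I _).le)
  have h := congrArg Complex.re (charFun_gaussianReal (μ := μ) (v := v) t)
  rw [charFun_apply_real, ← RCLike.re_to_complex, ← integral_re hint] at h
  convert h using 1
  · simp only [← Complex.ofReal_mul, RCLike.re_to_complex, Complex.exp_ofReal_mul_I_re]
  · simp [Complex.exp_re, ← Complex.ofReal_pow]

theorem integral_sin_sq_gaussianReal (μ : ℝ) (v : ℝ≥0) :
    ∫ x, Real.sin x ^ 2 ∂gaussianReal μ v = (1 - Real.exp (-(2 * v)) * Real.cos (2 * μ)) / 2 := by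
  have hcos : Integrable (fun x ↦ Real.cos (2 * x)) (gaussianReal μ v) :=
    Integrable.of_bound (by fun_prop) 1 (ae_of_all _ fun x ↦ by simpa using Real.abs_cos_le_one _)
  simp_rw [Real.sin_sq_eq_half_sub]
  rw [integral_sub (integrable_const _) (hcos.div_const 2), integral_div, integral_div,
    integral_cos_mul_gaussianReal, show -((v : ℝ) * 2 ^ 2 / 2) = -(2 * v) by ring]
  simp
  ring

theorem integral_mul_quadratic_add_eq_moments {Ω : Type*} [MeasurableSpace Ω] {P : Measure Ω}
    [IsFiniteMeasure P] {S W : Ω → ℝ} {C : ℝ} (hS : AEStronglyMeasurable S P)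
    (hSC : ∀ᵐ ω ∂P, ‖S ω‖ ≤ C) (hW : Integrable W P) (c d x a : ℝ) :
    ∫ ω, S ω * (c + d * (x + a * S ω) ^ 2 + W ω) ∂P
      = (c + d * x ^ 2) * ∫ ω, S ω ∂P + 2 * d * a * x * ∫ ω, S ω ^ 2 ∂P
        + d * a ^ 2 * ∫ ω, S ω ^ 3 ∂P + ∫ ω, S ω * W ω ∂P := by
  have hpow (n : ℕ) : Integrable (fun ω ↦ S ω ^ n) P :=
    Integrable.of_bound (hS.pow n) (C ^ n) (hSC.mono fun ω h ↦ by
      rw [norm_pow]; exact pow_le_pow_left₀ (norm_nonneg _) h n)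
  have h1 : Integrable (fun ω ↦ (c + d * x ^ 2) * S ω) P := by simpa using (hpow 1).const_mul _
  have h2 : Integrable (fun ω ↦ 2 * d * a * x * S ω ^ 2) P := (hpow 2).const_mul _
  have h3 : Integrable (fun ω ↦ d * a ^ 2 * S ω ^ 3) P := (hpow 3).const_mul _
  have hexpand : (fun ω ↦ S ω * (c + d * (x + a * S ω) ^ 2 + W ω)) = fun ω ↦
      (c + d * x ^ 2) * S ω + 2 * d * a * x * S ω ^ 2 + d * a ^ 2 * S ω ^ 3 + S ω * W ω := by
    ext ω; ring
  rw [hexpand, integral_add ((h1.fun_add h2).fun_add h3) (hW.bdd_mul hS hSC),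
    integral_add (h1.fun_add h2) h3, integral_add h1 h2, integral_const_mul, integral_const_mul,
    integral_const_mul]

theorem averaged_drift_static_map_general
    {Ω : Type*} [MeasureSpace Ω] [IsProbabilityMeasure (ℙ : Measure Ω)]
    (φstar φ'' a σ : ℝ)
    (v W : Ω → ℝ) (hWmeas : Measurable W)
    (hv : Measure.map v ℙ = gaussianReal 0 ⟨σ ^ 2, sq_nonneg σ⟩)
    (hWbdd : ∃ M : ℝ, ∀ ω : Ω, |W ω| ≤ M)
    (hindep : IndepFun v W ℙ)
    (hWmean : ∫ ω, W ω = 0)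
    (xt : ℝ) :
    ∫ ω, Real.sin (v ω) * (φstar + φ'' / 2 * (xt + a * Real.sin (v ω)) ^ 2 + W ω)
      = a * φ'' * (1 - Real.exp (-2 * σ ^ 2)) / 2 * xt := by
  obtain ⟨M, hM⟩ := hWbdd
  -- instance search does not see through the anonymous constructor `⟨σ ^ 2, _⟩`
  set s2 : ℝ≥0 := ⟨σ ^ 2, sq_nonneg σ⟩
  have hvm : AEMeasurable v := aemeasurable_of_map_neZero (by rw [hv]; infer_instance)
  have hlaw : HasLaw v (gaussianReal 0 s2) := ⟨hvm, hv⟩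
  have hW : Integrable W := Integrable.of_bound hWmeas.aestronglyMeasurable M (ae_of_all _ hM)
  have hsin : ∫ ω, Real.sin (v ω) = 0 :=
    (hlaw.integral_comp (by fun_prop)).trans (integral_eq_zero_of_odd _ Real.sin_neg)
  have hsin_sq : ∫ ω, Real.sin (v ω) ^ 2 = (1 - Real.exp (-2 * σ ^ 2)) / 2 := by
    refine (hlaw.integral_comp (f := fun x ↦ Real.sin x ^ 2) (by fun_prop)).trans ?_
    rw [integral_sin_sq_gaussianReal, show (s2 : ℝ) = σ ^ 2 from rfl]
    simp [neg_mul]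
  have hsin_cube : ∫ ω, Real.sin (v ω) ^ 3 = 0 :=
    (hlaw.integral_comp (f := fun x ↦ Real.sin x ^ 3) (by fun_prop)).trans
      (integral_eq_zero_of_odd _ fun x ↦ by rw [Real.sin_neg]; ring)
  have hsin_W : ∫ ω, Real.sin (v ω) * W ω = 0 :=
    ((hindep.comp Real.measurable_sin measurable_id).integral_fun_mul_eq_mul_integral
      (by fun_prop) hW.aestronglyMeasurable).trans (by simp [hWmean])
  rw [integral_mul_quadratic_add_eq_moments (by fun_prop) (C := 1)
    (ae_of_all _ fun ω ↦ by simpa using Real.abs_sin_le_one (v ω)) hW,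
    hsin, hsin_sq, hsin_cube, hsin_W]
  ring

theorem averaged_drift_static_map
    {Ω : Type*} [MeasureSpace Ω] [IsProbabilityMeasure (ℙ : Measure Ω)]
    (xstar φstar φ'' a σ : ℝ) (hφ : 0 < φ'') (ha : 0 < a) (hσ : 0 < σ)
    (v W : Ω → ℝ) (hvmeas : Measurable v) (hWmeas : Measurable W)
    (hv : Measure.map v ℙ = gaussianReal 0 ⟨σ ^ 2, sq_nonneg σ⟩)
    (hWbdd : ∃ M : ℝ, ∀ ω : Ω, |W ω| ≤ M)
    (hindep : IndepFun v W ℙ)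
    (hWmean : ∫ ω, W ω = 0)
    (xt : ℝ) :
    ∫ ω, Real.sin (v ω) * (φstar + φ'' / 2 * (xt + a * Real.sin (v ω)) ^ 2 + W ω)
      = a * φ'' * (1 - Real.exp (-2 * σ ^ 2)) / 2 * xt :=
  averaged_drift_static_map_general φstar φ'' a σ v W hWmeas hv hWbdd hindep hWmean xt
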